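/- arXiv:2405.11144 — 10 statements merged into one kernel-verified Lean document; each statement's English description precedes it below -/
import Mathlib

section
/- For every real number D > 0, the alternating series ∑_{k=1}^∞ (-1)^{k-1} · √(12·D²) / ((2k-1)·3^{k-1}) converges to π·D, the circumference of a circle of diameter D. -/
/-! Dividing the arctangent series by `x` and taking `x = 1/√3`, where `arctan x = π/6`, gives
`∑ (-1)^k / ((2k+1) 3^k) = √3 · π/6 = π/√12`; multiplying by `√(12 D²) = √12 · D` gives `π D`. -/

open Real

theorem Real.hasSum_arctan_div_self {x : ℝ} (hx : ‖x‖ < 1) (hx₀ : x ≠ 0) :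
    HasSum (fun k : ℕ => (-1 : ℝ) ^ k * (x ^ 2) ^ k / (2 * k + 1)) (arctan x / x) :=
  ((Real.hasSum_arctan hx).div_const x).congr_fun fun k => by
    rw [pow_succ x (2 * k), pow_mul]
    push_cast
    field_simp

theorem Real.hasSum_madhava_pi_div_sqrt_twelve :
    HasSum (fun k : ℕ => (-1 : ℝ) ^ k / ((2 * k + 1) * 3 ^ k)) (π / √12) := by
  have h3 : (0 : ℝ) < √3 := by positivity
  have hnorm : ‖(√3)⁻¹‖ < 1 := by
    rw [norm_inv, Real.norm_of_nonneg h3.le]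
    exact inv_lt_one_of_one_lt₀ ((lt_sqrt zero_le_one).2 (by norm_num))
  have hsum := Real.hasSum_arctan_div_self hnorm (inv_ne_zero h3.ne')
  rw [arctan_inv_sqrt_three, inv_pow, sq_sqrt (by norm_num)] at hsum
  have hvalue : π / 6 / (√3)⁻¹ = π / √12 := by
    rw [show (12 : ℝ) = 2 ^ 2 * 3 by norm_num, sqrt_mul' _ (by norm_num), sqrt_sq (by norm_num)]
    field_simp
    rw [sq_sqrt (by norm_num)]
    norm_num
  rw [hvalue] at hsum
  exact hsum.congr_fun fun k => by
    rw [inv_pow]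
    field_simp

/-- For every `D > 0`, the series `∑_{k=1}^∞ (-1)^{k-1} √(12 D²) / ((2k-1) 3^{k-1})`
converges to `π D` (indexed here by `k : ℕ` starting from 0, original index `k+1`). -/
theorem stmt_1 (D : ℝ) (hD : 0 < D) :
    HasSum (fun k : ℕ =>
      (-1 : ℝ) ^ k * Real.sqrt (12 * D ^ 2) / ((2 * ((k : ℝ) + 1) - 1) * 3 ^ k))
      (Real.pi * D) := by
  have hsqrt : √(12 * D ^ 2) = √12 * D := by
    rw [sqrt_mul' _ (sq_nonneg D), sqrt_sq hD.le]
  have hvalue : √12 * D * (π / √12) = π * D := by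
    field_simp
  rw [← hvalue]
  exact (Real.hasSum_madhava_pi_div_sqrt_twelve.mul_left (√12 * D)).congr_fun fun k => by
    rw [hsqrt]
    ring
end

section
/- Let S = ∑_{k=1}^{38} (-1)^{k-1} · (2·10^17·√3) / ((2k-1)·3^{k-1}) be the exact 38-term partial sum of the circumference series for a circle of diameter 10^17 (note √(12·10^34) = 2·10^17·√3). Then ⌊S⌋ = 314159265358979323 and ⌊S + 1/2⌋ = 314159265358979324. -/
/-- The exact 38-term partial sum
`S = ∑_{k=1}^{38} (-1)^{k-1} (2·10^17·√3) / ((2k-1)·3^{k-1})`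
satisfies `⌊S⌋ = 314159265358979323` and `⌊S + 1/2⌋ = 314159265358979324`. -/
theorem stmt_6 :
    ⌊∑ k ∈ Finset.range 38,
        (-1 : ℝ) ^ k * (2 * 10 ^ 17 * Real.sqrt 3) / ((2 * ((k : ℝ) + 1) - 1) * 3 ^ k)⌋
      = 314159265358979323 ∧
    ⌊(∑ k ∈ Finset.range 38,
        (-1 : ℝ) ^ k * (2 * 10 ^ 17 * Real.sqrt 3) / ((2 * ((k : ℝ) + 1) - 1) * 3 ^ k)) + 1 / 2⌋
      = 314159265358979324 := by
  set s := Real.sqrt 3 with hs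
  have hs0 : 0 ≤ s := Real.sqrt_nonneg 3
  have hs2 : s ^ 2 = 3 := Real.sq_sqrt (by norm_num)
  have hl : (1732050807568877293527446341 / 10 ^ 27 : ℝ) < s := by
    nlinarith [hs2, hs0]
  have hu : s < (1732050807568877293527446342 / 10 ^ 27 : ℝ) := by
    nlinarith [hs2, hs0]
  have key : ∑ k ∈ Finset.range 38,
        (-1 : ℝ) ^ k * (2 * 10 ^ 17 * s) / ((2 * ((k : ℝ) + 1) - 1) * 3 ^ k)
      = (2328545424110996504538048250060842337529399000192000000000000000 /
          12837943766145840070220952604806665061338006727 : ℝ) * s := by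
    have h : ∀ k ∈ Finset.range 38,
        (-1 : ℝ) ^ k * (2 * 10 ^ 17 * s) / ((2 * ((k : ℝ) + 1) - 1) * 3 ^ k)
        = ((-1 : ℝ) ^ k * (2 * 10 ^ 17) / ((2 * ((k : ℝ) + 1) - 1) * 3 ^ k)) * s := by
      intro k _; ring
    rw [Finset.sum_congr rfl h, ← Finset.sum_mul]
    norm_num [Finset.sum_range_succ]
  rw [key]
  have hq : (0 : ℝ) < 2328545424110996504538048250060842337529399000192000000000000000 /
      12837943766145840070220952604806665061338006727 := by norm_num
  set q : ℝ := 2328545424110996504538048250060842337529399000192000000000000000 /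
      12837943766145840070220952604806665061338006727 with hqdef
  clear_value s q
  have h1 : q * (1732050807568877293527446341 / 10 ^ 27 : ℝ) < q * s :=
    mul_lt_mul_of_pos_left hl hq
  have h2 : q * s < q * (1732050807568877293527446342 / 10 ^ 27 : ℝ) :=
    mul_lt_mul_of_pos_left hu hq
  have hlo : (3141592653589793238 / 10 : ℝ) < q * s := by
    have : (3141592653589793238 / 10 : ℝ) <
        q * (1732050807568877293527446341 / 10 ^ 27 : ℝ) := by
      rw [hqdef]; norm_num
    linarith
  have hhi : q * s < (3141592653589793239 / 10 : ℝ) := by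
    have : q * (1732050807568877293527446342 / 10 ^ 27 : ℝ) <
        (3141592653589793239 / 10 : ℝ) := by
      rw [hqdef]; norm_num
    linarith
  constructor
  · rw [Int.floor_eq_iff]
    constructor <;> push_cast <;> linarith
  · rw [Int.floor_eq_iff]
    constructor <;> push_cast <;> linarith
end

section
/- The number π·10^17 satisfies 314159265358979323 < π·10^17 < 314159265358979324, and its nearest integer is 314159265358979324; that is, ⌊π·10^17⌋ = 314159265358979323 and ⌊π·10^17 + 1/2⌋ = 314159265358979324. -/
/-- `314159265358979323 < π·10^17 < 314159265358979324`, with floor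
`314159265358979323` and nearest integer `314159265358979324`. -/
theorem stmt_7 :
    (314159265358979323 : ℝ) < Real.pi * 10 ^ 17 ∧
    Real.pi * 10 ^ 17 < 314159265358979324 ∧
    ⌊Real.pi * 10 ^ 17⌋ = 314159265358979323 ∧
    ⌊Real.pi * 10 ^ 17 + 1 / 2⌋ = 314159265358979324 := by
  have hgt : (3.14159265358979323846 : ℝ) < Real.pi := Real.pi_gt_d20
  have hlt : Real.pi < 3.14159265358979323847 := Real.pi_lt_d20
  have h1 : (314159265358979323 : ℝ) < Real.pi * 10 ^ 17 := by nlinarith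
  have h2 : Real.pi * 10 ^ 17 < 314159265358979324 := by nlinarith
  refine ⟨h1, h2, ?_, ?_⟩
  · rw [Int.floor_eq_iff]
    constructor <;> push_cast <;> [linarith; linarith]
  · rw [Int.floor_eq_iff]
    constructor <;> push_cast <;> nlinarith
end

section
/- The series 3 + ∑_{k=1}^∞ (-1)^{k+1} · 4 / ((2k+1)³ − (2k+1)) converges to π. Equivalently, for every real D > 0, the circumference of a circle of diameter D equals 3D + 4D/(3³−3) − 4D/(5³−5) + 4D/(7³−7) − ⋯. -/
open Filter Finset Real

private noncomputable def F3f (j : ℕ) : ℝ :=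
  (-1 : ℝ) ^ j * 4 / ((2 * (j : ℝ) + 3) ^ 3 - (2 * (j : ℝ) + 3))

private lemma F3denom_pos (j : ℕ) : 0 < (2 * (j : ℝ) + 3) ^ 3 - (2 * (j : ℝ) + 3) := by
  have hj : (0:ℝ) ≤ (j:ℝ) := Nat.cast_nonneg j
  nlinarith [mul_nonneg hj hj, mul_nonneg (mul_nonneg hj hj) hj]

private lemma F3_summable : Summable F3f := by
  have h2 : Summable (fun n : ℕ => 1 / ((n:ℝ)) ^ 2) :=
    (Real.summable_one_div_nat_pow).mpr one_lt_two
  have h3 : Summable (fun j : ℕ => 1 / ((j:ℝ) + 1) ^ 2) := by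
    have := (summable_nat_add_iff 1).mpr h2
    simpa [Nat.cast_add] using this
  apply Summable.of_abs
  apply Summable.of_nonneg_of_le (fun j => abs_nonneg _) _ h3
  intro j
  have hd := F3denom_pos j
  have hj : (0:ℝ) ≤ (j:ℝ) := Nat.cast_nonneg j
  have : |F3f j| = 4 / ((2 * (j : ℝ) + 3) ^ 3 - (2 * (j : ℝ) + 3)) := by
    rw [F3f, abs_div, abs_of_pos hd]
    congr 1
    rw [abs_mul, abs_pow, abs_neg, abs_one, one_pow, one_mul]
    norm_num
  rw [this, div_le_div_iff₀ hd (by positivity)]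
  nlinarith

private lemma F3_partial (n : ℕ) :
    ∑ j ∈ range n, F3f j =
      4 * ∑ i ∈ range (n + 1), (-1 : ℝ) ^ i / (2 * i + 1) - 3 - (-1 : ℝ) ^ n / (n + 1) := by
  induction n with
  | zero => simp [F3f]; norm_num
  | succ n ih =>
    rw [Finset.sum_range_succ, ih, F3f]
    rw [Finset.sum_range_succ (n := n + 1)]
    have hd := F3denom_pos n
    have h1 : (2 * ((n:ℝ)+1) + 1) ≠ 0 := by positivity
    have h2 : ((n:ℝ) + 1) ≠ 0 := by positivity
    have h3 : ((n:ℝ) + 1 + 1) ≠ 0 := by positivity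
    have ha : (2*(n:ℝ)+2) ≠ 0 := by positivity
    have hb : (2*(n:ℝ)+3) ≠ 0 := by positivity
    have hc : (2*(n:ℝ)+4) ≠ 0 := by positivity
    push_cast
    rw [show (2*(n:ℝ)+3)^3 - (2*(n:ℝ)+3) = (2*n+2)*((2*n+3)*(2*n+4)) from by ring]
    field_simp
    ring

/-- Formula F3: `3 + ∑_{k=1}^∞ (-1)^{k+1}·4/((2k+1)³−(2k+1)) = π`
(indexed here by `j : ℕ` with original index `k = j+1`, so `2k+1 = 2j+3` and
`(-1)^{k+1} = (-1)^j`); equivalently, for every `D > 0` the circumference `π D`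
equals `3D + 4D/(3³−3) − 4D/(5³−5) + ⋯`. -/
theorem stmt_10 :
    HasSum (fun j : ℕ =>
        (-1 : ℝ) ^ j * 4 / ((2 * (j : ℝ) + 3) ^ 3 - (2 * (j : ℝ) + 3)))
      (Real.pi - 3) ∧
    ∀ D : ℝ, 0 < D →
      HasSum (fun j : ℕ =>
          (-1 : ℝ) ^ j * (4 * D) / ((2 * (j : ℝ) + 3) ^ 3 - (2 * (j : ℝ) + 3)))
        (Real.pi * D - 3 * D) := by
  have hmain : HasSum F3f (Real.pi - 3) := by
    rw [F3_summable.hasSum_iff_tendsto_nat]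
    have hL : Tendsto (fun n : ℕ => 4 * ∑ i ∈ range (n + 1), (-1 : ℝ) ^ i / (2 * i + 1))
        atTop (nhds (4 * (Real.pi / 4))) :=
      (Real.tendsto_sum_pi_div_four.comp (tendsto_add_atTop_nat 1)).const_mul (4:ℝ)
    rw [show (4:ℝ) * (Real.pi / 4) = Real.pi from by ring] at hL
    have h0 : Tendsto (fun n : ℕ => (-1 : ℝ) ^ n / (n + 1)) atTop (nhds 0) := by
      apply squeeze_zero_norm (fun n => ?_) tendsto_one_div_add_atTop_nhds_zero_nat
      have : (0:ℝ) < (n:ℝ) + 1 := by positivity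
      rw [norm_div, norm_pow, norm_neg, norm_one, one_pow]
      simp [abs_of_pos this]
    have := (hL.sub (tendsto_const_nhds (x := (3:ℝ)))).sub h0
    simp only [sub_zero] at this
    apply this.congr'
    filter_upwards with n
    exact (F3_partial n).symm
  refine ⟨hmain, fun D hD => ?_⟩
  have h2 := hmain.mul_right D
  have heq : (fun j : ℕ =>
      (-1 : ℝ) ^ j * (4 * D) / ((2 * (j : ℝ) + 3) ^ 3 - (2 * (j : ℝ) + 3))) =
      fun j => F3f j * D := by
    funext j; rw [F3f]; ring
  rw [heq, show Real.pi * D - 3 * D = (Real.pi - 3) * D by ring]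
  exact h2
end

section
/- The series ∑_{k=1}^∞ (-1)^{k-1} · 16 / ((2k-1)⁵ + 4·(2k-1)) converges to π. Equivalently, for every real D > 0, the circumference of a circle of diameter D equals 16D/(1⁵+4·1) − 16D/(3⁵+4·3) + 16D/(5⁵+4·5) − ⋯. -/
/-! The summand splits into partial fractions as `4 / m` minus a telescoping part: with
`h x = x / (x ^ 2 + 1)`, the identity `m ^ 4 + 4 = ((m - 1) ^ 2 + 1) * ((m + 1) ^ 2 + 1)` gives
`16 / (m ^ 5 + 4 m) = 4 / m - 2 (h (m - 1) + h (m + 1))`. For `m = 2k + 1` with the sign `(-1) ^ k`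
the second part telescopes, so the `N`-th partial sum is four times the `N`-th partial sum of
Leibniz's series for `π / 4`, up to an error `± 2 h (2N)` that tends to `0`. -/

open Filter Finset Real Topology

noncomputable def madhavaF4Term (k : ℕ) : ℝ :=
  (-1) ^ k * 16 / ((2 * (k : ℝ) + 1) ^ 5 + 4 * (2 * (k : ℝ) + 1))

lemma sixteen_div_pow_five_add_four_mul {m : ℝ} (hm : m ≠ 0) :
    16 / (m ^ 5 + 4 * m) =
      4 / m - 2 * ((m - 1) / ((m - 1) ^ 2 + 1) + (m + 1) / ((m + 1) ^ 2 + 1)) := by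
  have h₁ : (m - 1) ^ 2 + 1 ≠ 0 := by positivity
  have h₂ : (m + 1) ^ 2 + 1 ≠ 0 := by positivity
  have h₃ : m ^ 5 + 4 * m ≠ 0 := by
    rw [show m ^ 5 + 4 * m = m * (m ^ 4 + 4) by ring]
    positivity
  field_simp
  ring

lemma tendsto_div_sq_add_one_atTop : Tendsto (fun x : ℝ => x / (x ^ 2 + 1)) atTop (𝓝 0) := by
  refine tendsto_of_tendsto_of_tendsto_of_le_of_le' tendsto_const_nhds tendsto_inv_atTop_zero
    ?_ ?_
  · filter_upwards [eventually_ge_atTop 0] with x hx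
    positivity
  · filter_upwards [eventually_gt_atTop 0] with x hx
    rw [div_le_iff₀ (by positivity), inv_mul_eq_div, le_div_iff₀ hx]
    nlinarith

lemma abs_madhavaF4Term_le (k : ℕ) : |madhavaF4Term k| ≤ 16 / ((k : ℝ) + 1) ^ 2 := by
  rw [madhavaF4Term, abs_div, abs_mul, abs_pow, abs_neg, abs_one, one_pow, one_mul,
    abs_of_pos (by norm_num : (0 : ℝ) < 16), abs_of_pos (by positivity)]
  gcongr
  nlinarith [pow_le_pow_right₀ (by linarith [k.cast_nonneg (α := ℝ)] : (1 : ℝ) ≤ 2 * k + 1)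
    (by norm_num : 2 ≤ 5)]

lemma summable_madhavaF4Term : Summable madhavaF4Term := by
  have hbound : Summable fun k : ℕ => 16 / ((k : ℝ) + 1) ^ 2 := by
    have := ((summable_nat_add_iff 1).mpr
      (Real.summable_one_div_nat_pow.mpr one_lt_two)).mul_left 16
    simpa [div_eq_mul_inv] using this
  exact Summable.of_norm_bounded hbound abs_madhavaF4Term_le

lemma sum_range_madhavaF4Term (N : ℕ) :
    ∑ k ∈ range N, madhavaF4Term k =
      4 * ∑ k ∈ range N, (-1) ^ k / (2 * (k : ℝ) + 1)
        + 2 * ((-1) ^ N * (2 * (N : ℝ) / ((2 * N) ^ 2 + 1))) := by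
  set a : ℕ → ℝ := fun k => (-1) ^ k * (2 * (k : ℝ) / ((2 * k) ^ 2 + 1))
  have hterm (k : ℕ) :
      madhavaF4Term k = 4 * ((-1) ^ k / (2 * (k : ℝ) + 1)) - 2 * (a k - a (k + 1)) := by
    rw [madhavaF4Term, mul_div_assoc, sixteen_div_pow_five_add_four_mul (by positivity)]
    simp only [a, pow_succ]
    push_cast
    ring_nf
  rw [sum_congr rfl fun k _ => hterm k, sum_sub_distrib, ← mul_sum, ← mul_sum, sum_range_sub']
  simp [a]

theorem hasSum_madhavaF4Term : HasSum madhavaF4Term π := by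
  rw [summable_madhavaF4Term.hasSum_iff_tendsto_nat]
  have herror : Tendsto (fun N : ℕ => (-1) ^ N * (2 * (N : ℝ) / ((2 * N) ^ 2 + 1)))
      atTop (𝓝 0) := by
    have h := tendsto_div_sq_add_one_atTop.comp
      (tendsto_natCast_atTop_atTop.const_mul_atTop (two_pos (α := ℝ)))
    rw [tendsto_zero_iff_norm_tendsto_zero]
    simpa [norm_mul] using h.norm
  have := (tendsto_sum_pi_div_four.const_mul 4).add (herror.const_mul 2)
  simpa [sum_range_madhavaF4Term, mul_div_cancel₀] using this

/-- Formula F4: `∑_{k=1}^∞ (-1)^{k-1}·16/((2k-1)⁵+4(2k-1)) = π`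
(indexed here by `k : ℕ` starting from 0, so `2k-1` becomes `2k+1`);
equivalently, for every `D > 0` the circumference `π D` equals
`16D/(1⁵+4·1) − 16D/(3⁵+4·3) + ⋯`. -/
theorem stmt_11 :
    HasSum (fun k : ℕ =>
        (-1 : ℝ) ^ k * 16 / ((2 * (k : ℝ) + 1) ^ 5 + 4 * (2 * (k : ℝ) + 1)))
      Real.pi ∧
    ∀ D : ℝ, 0 < D →
      HasSum (fun k : ℕ =>
          (-1 : ℝ) ^ k * (16 * D) / ((2 * (k : ℝ) + 1) ^ 5 + 4 * (2 * (k : ℝ) + 1)))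
        (Real.pi * D) := by
  refine ⟨hasSum_madhavaF4Term, fun D _ => ?_⟩
  refine (hasSum_madhavaF4Term.mul_right D).congr_fun fun k => ?_
  rw [madhavaF4Term]
  ring
end

section
/- With D = 9·10^11, the sum 3D + ∑_{k=1}^{7662} (-1)^{k+1} · ⌊4D / ((2k+1)³ − (2k+1))⌋ equals 2827433388211; since ⌊4D/((2k+1)³−(2k+1))⌋ = 0 for all k ≥ 7663, this is the value to which formula F3 sums when every term is truncated to its integer part. In particular it differs from Mādhava's value 2827433388233. -/
set_option maxRecDepth 2000

private def gterm (k : ℕ) : ℤ :=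
  (if k % 2 = 0 then -1 else 1) * ((4 * (9 * 10 ^ 11) / ((2 * k + 1) ^ 3 - (2 * k + 1)) : ℕ) : ℤ)

private lemma sign_eq (k : ℕ) :
    (-1 : ℤ) ^ (k + 1) = (if k % 2 = 0 then -1 else 1) := by
  rcases Nat.even_or_odd k with h | h
  · rw [if_pos (Nat.even_iff.mp h), pow_succ, h.neg_one_pow, one_mul]
  · rw [if_neg (by simpa [Nat.odd_iff] using h), pow_succ, h.neg_one_pow]
    norm_num

private def T : ℕ → ℕ → ℤ
  | _, 0 => 0
  | a, n + 1 => T a n + gterm (a + n + 1)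

private lemma T_add (a m n : ℕ) : T a (m + n) = T a m + T (a + m) n := by
  induction n with
  | zero => simp [T]
  | succ p ih =>
      show T a (m + p) + gterm (a + (m + p) + 1)
        = T a m + (T (a + m) p + gterm (a + m + p + 1))
      rw [ih, show a + (m + p) + 1 = a + m + p + 1 from by omega]
      ring

private lemma T_0 : T 0 300 = 127433379985 := by decide
private lemma T_300 : T 300 300 = 7207 := by decide
private lemma T_600 : T 600 300 = 725 := by decide
private lemma T_900 : T 900 300 = 178 := by decide
private lemma T_1200 : T 1200 300 = 60 := by decide
private lemma T_1500 : T 1500 300 = 23 := by decide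
private lemma T_1800 : T 1800 300 = 14 := by decide
private lemma T_2100 : T 2100 300 = 4 := by decide
private lemma T_2400 : T 2400 300 = 5 := by decide
private lemma T_2700 : T 2700 300 = 4 := by decide
private lemma T_3000 : T 3000 300 = 1 := by decide
private lemma T_3300 : T 3300 300 = 1 := by decide
private lemma T_3600 : T 3600 300 = 2 := by decide
private lemma T_3900 : T 3900 300 = 1 := by decide
private lemma T_4200 : T 4200 300 = 0 := by decide
private lemma T_4500 : T 4500 300 = 0 := by decide
private lemma T_4800 : T 4800 300 = 0 := by decide
private lemma T_5100 : T 5100 300 = 0 := by decide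
private lemma T_5400 : T 5400 300 = 0 := by decide
private lemma T_5700 : T 5700 300 = 0 := by decide
private lemma T_6000 : T 6000 300 = 1 := by decide
private lemma T_6300 : T 6300 300 = 0 := by decide
private lemma T_6600 : T 6600 300 = 0 := by decide
private lemma T_6900 : T 6900 300 = 0 := by decide
private lemma T_7200 : T 7200 300 = 0 := by decide
private lemma T_7500 : T 7500 162 = 0 := by decide

private lemma T_total : T 0 7662 = 127433388211 := by
  rw [show (7662:ℕ) = 300 + 7362 from rfl, T_add, T_0]
  rw [show (7362:ℕ) = 300 + 7062 from rfl, T_add, T_300]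
  rw [show (7062:ℕ) = 300 + 6762 from rfl, T_add, T_600]
  rw [show (6762:ℕ) = 300 + 6462 from rfl, T_add, T_900]
  rw [show (6462:ℕ) = 300 + 6162 from rfl, T_add, T_1200]
  rw [show (6162:ℕ) = 300 + 5862 from rfl, T_add, T_1500]
  rw [show (5862:ℕ) = 300 + 5562 from rfl, T_add, T_1800]
  rw [show (5562:ℕ) = 300 + 5262 from rfl, T_add, T_2100]
  rw [show (5262:ℕ) = 300 + 4962 from rfl, T_add, T_2400]
  rw [show (4962:ℕ) = 300 + 4662 from rfl, T_add, T_2700]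
  rw [show (4662:ℕ) = 300 + 4362 from rfl, T_add, T_3000]
  rw [show (4362:ℕ) = 300 + 4062 from rfl, T_add, T_3300]
  rw [show (4062:ℕ) = 300 + 3762 from rfl, T_add, T_3600]
  rw [show (3762:ℕ) = 300 + 3462 from rfl, T_add, T_3900]
  rw [show (3462:ℕ) = 300 + 3162 from rfl, T_add, T_4200]
  rw [show (3162:ℕ) = 300 + 2862 from rfl, T_add, T_4500]
  rw [show (2862:ℕ) = 300 + 2562 from rfl, T_add, T_4800]
  rw [show (2562:ℕ) = 300 + 2262 from rfl, T_add, T_5100]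
  rw [show (2262:ℕ) = 300 + 1962 from rfl, T_add, T_5400]
  rw [show (1962:ℕ) = 300 + 1662 from rfl, T_add, T_5700]
  rw [show (1662:ℕ) = 300 + 1362 from rfl, T_add, T_6000]
  rw [show (1362:ℕ) = 300 + 1062 from rfl, T_add, T_6300]
  rw [show (1062:ℕ) = 300 + 762 from rfl, T_add, T_6600]
  rw [show (762:ℕ) = 300 + 462 from rfl, T_add, T_6900]
  rw [show (462:ℕ) = 300 + 162 from rfl, T_add, T_7200]
  rw [T_7500]
  norm_num

private lemma sum_eq_T (n : ℕ) :
    (∑ k ∈ Finset.Icc (1 : ℕ) n, gterm k) = T 0 n := by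
  induction n with
  | zero => simp [T]
  | succ m ih =>
      rw [Finset.sum_Icc_succ_top (by omega), ih]
      show _ = T 0 m + gterm (0 + m + 1)
      rw [Nat.zero_add]

private lemma floor_key (k : ℕ) :
    ⌊(4 * (9 * 10 ^ 11) : ℝ) / ((2 * (k : ℝ) + 1) ^ 3 - (2 * (k : ℝ) + 1))⌋
      = ((4 * (9 * 10 ^ 11) / ((2 * k + 1) ^ 3 - (2 * k + 1)) : ℕ) : ℤ) := by
  have hle : 2 * k + 1 ≤ (2 * k + 1) ^ 3 := Nat.le_self_pow (by norm_num) _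
  have hd : ((2 * (k : ℝ) + 1) ^ 3 - (2 * (k : ℝ) + 1))
      = (((2 * k + 1) ^ 3 - (2 * k + 1) : ℕ) : ℝ) := by
    push_cast [hle]; ring
  have hnum : (4 * (9 * 10 ^ 11) : ℝ) = ((4 * (9 * 10 ^ 11) : ℕ) : ℝ) := by norm_num
  rw [hd, hnum]
  rw [show ((4 * (9 * 10 ^ 11) : ℕ) : ℝ) = (((4 * (9 * 10 ^ 11) : ℕ) : ℚ) : ℝ) by push_cast; ring,
    show (((2 * k + 1) ^ 3 - (2 * k + 1) : ℕ) : ℝ) = ((((2 * k + 1) ^ 3 - (2 * k + 1) : ℕ) : ℚ) : ℝ) by push_cast; ring,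
    ← Rat.cast_div, Rat.floor_cast, Rat.floor_natCast_div_natCast]
  exact (Int.ofNat_tdiv _ _).symm

/-- Formula F3 with every term truncated to its integer part, `D = 9·10^11`:
`3D + ∑_{k=1}^{7662} (-1)^{k+1} ⌊4D/((2k+1)³−(2k+1))⌋ = 2827433388211`,
the floored terms vanish for `k ≥ 7663`, and the result differs from
Mādhava's value `2827433388233`. -/
theorem stmt_13 :
    3 * (9 * 10 ^ 11) + (∑ k ∈ Finset.Icc (1 : ℕ) 7662, (-1 : ℤ) ^ (k + 1) *
        ⌊(4 * (9 * 10 ^ 11) : ℝ) / ((2 * (k : ℝ) + 1) ^ 3 - (2 * (k : ℝ) + 1))⌋)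
      = 2827433388211 ∧
    (∀ k : ℕ, 7663 ≤ k →
      ⌊(4 * (9 * 10 ^ 11) : ℝ) / ((2 * (k : ℝ) + 1) ^ 3 - (2 * (k : ℝ) + 1))⌋ = 0) ∧
    (2827433388211 : ℤ) ≠ 2827433388233 := by
  refine ⟨?_, ?_, by norm_num⟩
  · simp only [floor_key]
    have : (∑ k ∈ Finset.Icc (1 : ℕ) 7662, gterm k) = 127433388211 := by
      rw [sum_eq_T, T_total]
    simp only [gterm] at this
    simp only [sign_eq]
    rw [this]
    norm_num
  · intro k hk
    rw [floor_key]
    have h : (4 * (9 * 10 ^ 11) : ℕ) < (2 * k + 1) ^ 3 - (2 * k + 1) := by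
      have hn : 15327 ≤ 2 * k + 1 := by omega
      have h1 : 234916929 * (2 * k + 1) ≤ (2 * k + 1) * (2 * k + 1) * (2 * k + 1) := by
        nlinarith
      have h2 : (2 * k + 1) ^ 3 = (2 * k + 1) * (2 * k + 1) * (2 * k + 1) := by ring
      rw [h2]
      omega
    rw [Nat.div_eq_of_lt h]
    simp
end

section
/- With D = 9·10^11, for every integer n ≥ 8950 the exact partial sum S_n = 3D + ∑_{k=1}^{n} (-1)^{k+1} · 4D / ((2k+1)³ − (2k+1)) satisfies ⌊S_n + 1/2⌋ = 2827433388231. In particular, formula F3 with rounding performed only at the final stage yields 2827433388231, which differs from Mādhava's value 2827433388233. -/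
def mF3g (k : ℕ) : ℤ :=
  if k % 2 = 1 then ((36 * 10^21) / ((2*k+1)^3 - (2*k+1)) : ℕ)
  else -(((36 * 10^21) / ((2*k+1)^3 - (2*k+1)) : ℕ) : ℤ)

def mF3U : ℕ → ℕ → ℤ
  | _, 0 => 0
  | a, n+1 => mF3U a n + mF3g (a+n+1)

lemma mF3U_add (a n m : ℕ) : mF3U a (n + m) = mF3U a n + mF3U (a + n) m := by
  induction m with
  | zero => simp [mF3U]
  | succ m ih =>
    show mF3U a ((n + m) + 1) = mF3U a n + mF3U (a + n) (m + 1)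
    rw [mF3U, mF3U, ih, show a + (n + m) + 1 = a + n + m + 1 by omega]
    ring

lemma mF3U_split (n m : ℕ) : mF3U 0 (n + m) = mF3U 0 n + mF3U n m := by
  simpa using mF3U_add 0 n m

lemma mF3U_eq_sum (n : ℕ) : mF3U 0 n = ∑ k ∈ Finset.Icc 1 n, mF3g k := by
  induction n with
  | zero => simp [mF3U]
  | succ n ih =>
    rw [Finset.sum_Icc_succ_top (by omega : 1 ≤ n + 1), ← ih, mF3U]
    norm_num

noncomputable def mF3t (k : ℕ) : ℝ :=
  4 * (9 * 10 ^ 11) / ((2 * (k : ℝ) + 1) ^ 3 - (2 * (k : ℝ) + 1))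

noncomputable def mF3S (n : ℕ) : ℝ :=
  (3 * (9 * 10 ^ 11) : ℝ) + (∑ k ∈ Finset.Icc 1 n, (-1 : ℝ) ^ (k + 1) *
      (4 * (9 * 10 ^ 11)) / ((2 * (k : ℝ) + 1) ^ 3 - (2 * (k : ℝ) + 1)))

lemma mF3dpos (k : ℕ) (hk : 1 ≤ k) :
    (0:ℝ) < (2 * (k : ℝ) + 1) ^ 3 - (2 * (k : ℝ) + 1) := by
  have h : (1:ℝ) ≤ (k:ℝ) := by exact_mod_cast hk
  have h3 : (3:ℝ) ≤ 2 * (k:ℝ) + 1 := by linarith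
  have h9 : (9:ℝ) ≤ (2 * (k:ℝ) + 1) ^ 2 := by nlinarith
  nlinarith

lemma mF3tpos (k : ℕ) (hk : 1 ≤ k) : 0 < mF3t k := by
  unfold mF3t
  exact div_pos (by norm_num) (mF3dpos k hk)

lemma mF3tmono (k : ℕ) (hk : 1 ≤ k) : mF3t (k+1) ≤ mF3t k := by
  unfold mF3t
  have h : (1:ℝ) ≤ (k:ℝ) := by exact_mod_cast hk
  have h1 := mF3dpos k hk
  have h2 := mF3dpos (k+1) (by omega)
  rw [div_le_div_iff₀ h2 h1]
  push_cast
  nlinarith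

lemma mF3S_succ (n : ℕ) :
    mF3S (n+1) = mF3S n + (-1 : ℝ) ^ (n+1+1) * mF3t (n+1) := by
  unfold mF3S mF3t
  rw [Finset.sum_Icc_succ_top (by omega : 1 ≤ n + 1), mul_div_assoc]
  ring

lemma mF3bracket : ∀ m : ℕ,
    mF3S 8950 ≤ mF3S (8950 + 2*m) ∧ mF3S (8950 + 2*m + 1) ≤ mF3S 8951 := by
  intro m
  induction m with
  | zero => norm_num
  | succ m ih =>
    have key1 : mF3S (8950 + 2*m + 1) = mF3S (8950 + 2*m) + mF3t (8950 + 2*m + 1) := by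
      have h := mF3S_succ (8950 + 2*m)
      rw [Even.neg_one_pow ⟨4476 + m, by omega⟩, one_mul] at h
      exact h
    have key2 : mF3S (8950 + 2*m + 2) = mF3S (8950 + 2*m + 1) + (-1) * mF3t (8950 + 2*m + 2) := by
      have h := mF3S_succ (8950 + 2*m + 1)
      rw [Odd.neg_one_pow ⟨4476 + m, by omega⟩] at h
      rw [show 8950 + 2*m + 1 + 1 = 8950 + 2*m + 2 by omega] at h
      exact h
    have key3 : mF3S (8950 + 2*m + 3) = mF3S (8950 + 2*m + 2) + mF3t (8950 + 2*m + 3) := by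
      have h := mF3S_succ (8950 + 2*m + 2)
      rw [Even.neg_one_pow ⟨4477 + m, by omega⟩, one_mul] at h
      rw [show 8950 + 2*m + 2 + 1 = 8950 + 2*m + 3 by omega] at h
      exact h
    have mono1 : mF3t (8950 + 2*m + 2) ≤ mF3t (8950 + 2*m + 1) := by
      have h := mF3tmono (8950 + 2*m + 1) (by omega)
      rw [show 8950 + 2*m + 1 + 1 = 8950 + 2*m + 2 by omega] at h
      exact h
    have mono2 : mF3t (8950 + 2*m + 3) ≤ mF3t (8950 + 2*m + 2) := by
      have h := mF3tmono (8950 + 2*m + 2) (by omega)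
      rw [show 8950 + 2*m + 2 + 1 = 8950 + 2*m + 3 by omega] at h
      exact h
    rw [show 8950 + 2*(m+1) = 8950 + 2*m + 2 by omega,
        show 8950 + 2*m + 2 + 1 = 8950 + 2*m + 3 by omega]
    exact ⟨by linarith [ih.1], by linarith [ih.2]⟩

lemma mF3termBound (k : ℕ) (hk : 1 ≤ k) :
    |(-1 : ℝ) ^ (k + 1) * (4 * (9 * 10 ^ 11)) / ((2 * (k : ℝ) + 1) ^ 3 - (2 * (k : ℝ) + 1))
      - (mF3g k : ℝ) / 10 ^ 10| ≤ 1 / 10 ^ 10 := by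
  have hlt : 2*k+1 < (2*k+1)^3 := by
    have h3 : 3 ≤ 2*k+1 := by omega
    have h9 : 9 ≤ (2*k+1)^2 := by nlinarith
    nlinarith
  have hdpos : 0 < (2*k+1)^3 - (2*k+1) := by omega
  have hdcast : ((((2*k+1)^3 - (2*k+1) : ℕ)) : ℝ)
      = (2 * (k : ℝ) + 1) ^ 3 - (2 * (k : ℝ) + 1) := by
    rw [Nat.cast_sub hlt.le]
    push_cast
    ring
  have hdrpos : (0:ℝ) < ((((2*k+1)^3 - (2*k+1) : ℕ)) : ℝ) := by exact_mod_cast hdpos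
  set f : ℕ := (36 * 10^21) / ((2*k+1)^3 - (2*k+1)) with hf
  have hfl : (f:ℝ) * ((((2*k+1)^3 - (2*k+1) : ℕ)) : ℝ) ≤ 36 * 10^21 := by
    exact_mod_cast Nat.div_mul_le_self (36 * 10^21) ((2*k+1)^3 - (2*k+1))
  have hfu : (36 * 10^21 : ℝ) < ((f:ℝ) + 1) * ((((2*k+1)^3 - (2*k+1) : ℕ)) : ℝ) := by
    have h1 := Nat.div_add_mod (36 * 10^21) ((2*k+1)^3 - (2*k+1))
    have h2 : (36 * 10^21) % ((2*k+1)^3 - (2*k+1)) < ((2*k+1)^3 - (2*k+1)) :=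
      Nat.mod_lt _ hdpos
    have h3 : 36 * 10^21 < (f + 1) * ((2*k+1)^3 - (2*k+1)) := by
      calc 36 * 10^21 = ((2*k+1)^3 - (2*k+1)) * f + (36 * 10^21) % ((2*k+1)^3 - (2*k+1)) := by
            rw [hf]; exact h1.symm
        _ < ((2*k+1)^3 - (2*k+1)) * f + ((2*k+1)^3 - (2*k+1)) := by omega
        _ = (f + 1) * ((2*k+1)^3 - (2*k+1)) := by ring
    exact_mod_cast h3
  have hA : (f:ℝ) / 10^10 ≤ 36 * 10^11 / ((((2*k+1)^3 - (2*k+1) : ℕ)) : ℝ) := by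
    rw [div_le_div_iff₀ (by norm_num) hdrpos]
    nlinarith
  have hB : 36 * 10^11 / ((((2*k+1)^3 - (2*k+1) : ℕ)) : ℝ) ≤ ((f:ℝ) + 1) / 10^10 := by
    rw [div_le_div_iff₀ hdrpos (by norm_num)]
    nlinarith
  rw [← hdcast]
  rcases Nat.even_or_odd k with he | ho
  · have hg : mF3g k = -(f:ℤ) := by
      have h0 : k % 2 = 0 := Nat.even_iff.mp he
      rw [mF3g, if_neg (by omega : ¬ k % 2 = 1), hf]
    have hsign : (-1 : ℝ) ^ (k + 1) = -1 := (Odd.neg_one_pow (Even.add_one he))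
    rw [hg, hsign]
    have hexp : (-1 : ℝ) * (4 * (9 * 10 ^ 11)) / ((((2*k+1)^3 - (2*k+1) : ℕ)) : ℝ)
        = -(36 * 10^11 / ((((2*k+1)^3 - (2*k+1) : ℕ)) : ℝ)) := by ring
    rw [hexp]
    push_cast
    rw [abs_le]
    constructor <;> [linarith; linarith]
  · have hg : mF3g k = (f:ℤ) := by
      rw [mF3g, if_pos (Nat.odd_iff.mp ho), hf]
    have hsign : (-1 : ℝ) ^ (k + 1) = 1 := (Even.neg_one_pow (Odd.add_one ho))
    rw [hg, hsign]
    have hexp : (1 : ℝ) * (4 * (9 * 10 ^ 11)) / ((((2*k+1)^3 - (2*k+1) : ℕ)) : ℝ)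
        = 36 * 10^11 / ((((2*k+1)^3 - (2*k+1) : ℕ)) : ℝ) := by ring
    rw [hexp]
    push_cast
    rw [abs_le]
    constructor <;> [linarith; linarith]

lemma mF3sumBound (n : ℕ) :
    |(∑ k ∈ Finset.Icc 1 n, (-1 : ℝ) ^ (k + 1) * (4 * (9 * 10 ^ 11)) /
        ((2 * (k : ℝ) + 1) ^ 3 - (2 * (k : ℝ) + 1))) - (mF3U 0 n : ℝ) / 10 ^ 10|
      ≤ (n : ℝ) / 10 ^ 10 := by
  have hU : ((mF3U 0 n : ℤ) : ℝ) = ∑ k ∈ Finset.Icc 1 n, ((mF3g k : ℤ) : ℝ) := by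
    rw [mF3U_eq_sum]
    push_cast
    rfl
  rw [hU, Finset.sum_div, ← Finset.sum_sub_distrib]
  refine (Finset.abs_sum_le_sum_abs _ _).trans ?_
  have hle : ∀ k ∈ Finset.Icc 1 n, |(-1 : ℝ) ^ (k + 1) * (4 * (9 * 10 ^ 11)) /
        ((2 * (k : ℝ) + 1) ^ 3 - (2 * (k : ℝ) + 1)) - (mF3g k : ℝ) / 10 ^ 10| ≤ 1 / 10 ^ 10 :=
    fun k hk => mF3termBound k (Finset.mem_Icc.mp hk).1
  refine (Finset.sum_le_sum hle).trans ?_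
  rw [Finset.sum_const, Nat.card_Icc, nsmul_eq_mul, Nat.add_sub_cancel, mul_one_div]

set_option maxRecDepth 100000 in
/-- Formula F3 with rounding only at the final stage, `D = 9·10^11`: for every
`n ≥ 8950` the exact partial sum
`S_n = 3D + ∑_{k=1}^{n} (-1)^{k+1}·4D/((2k+1)³−(2k+1))` satisfies
`⌊S_n + 1/2⌋ = 2827433388231`, which differs from Mādhava's value `2827433388233`. -/
theorem stmt_15 :
    (∀ n : ℕ, 8950 ≤ n →
      ⌊(3 * (9 * 10 ^ 11) : ℝ) + (∑ k ∈ Finset.Icc 1 n, (-1 : ℝ) ^ (k + 1) *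
          (4 * (9 * 10 ^ 11)) / ((2 * (k : ℝ) + 1) ^ 3 - (2 * (k : ℝ) + 1))) + 1 / 2⌋
        = 2827433388231) ∧
    (2827433388231 : ℤ) ≠ 2827433388233 := by
  constructor
  · intro n hn
    have e0 : mF3U 0 500 = 1274333864415797686150 := by decide
    have e1 : mF3U 500 500 = 15649080780952 := by decide
    have e2 : mF3U 1000 500 = 1577925939063 := by decide
    have e3 : mF3U 1500 500 = 384506281156 := by decide
    have e4 : mF3U 2000 500 = 137001149438 := by decide
    have e5 : mF3U 2500 500 = 60577265416 := by decide
    have e6 : mF3U 3000 500 = 30816870769 := by decide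
    have e7 : mF3U 3500 500 = 17303279932 := by decide
    have e8 : mF3U 4000 500 = 10454990325 := by decide
    have e9 : mF3U 4500 500 = 6685699490 := by decide
    have e10 : mF3U 5000 500 = 4472911423 := by decide
    have e11 : mF3U 5500 500 = 3104832297 := by decide
    have e12 : mF3U 6000 500 = 2222249734 := by decide
    have e13 : mF3U 6500 500 = 1632253918 := by decide
    have e14 : mF3U 7000 500 = 1225755622 := by decide
    have e15 : mF3U 7500 500 = 938316815 := by decide
    have e16 : mF3U 8000 500 = 730427236 := by decide
    have e17 : mF3U 8500 450 = 525071217 := by decide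
    have e18 : mF3U 8950 1 = 6273719063 := by decide
    have c0 : mF3U 0 500 = 1274333864415797686150 := e0
    have c1 : mF3U 0 1000 = 1274333880064878467102 := by
      rw [show (1000:ℕ) = 500 + 500 from rfl, mF3U_split, c0, e1]
      norm_num
    have c2 : mF3U 0 1500 = 1274333881642804406165 := by
      rw [show (1500:ℕ) = 1000 + 500 from rfl, mF3U_split, c1, e2]
      norm_num
    have c3 : mF3U 0 2000 = 1274333882027310687321 := by
      rw [show (2000:ℕ) = 1500 + 500 from rfl, mF3U_split, c2, e3]
      norm_num
    have c4 : mF3U 0 2500 = 1274333882164311836759 := by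
      rw [show (2500:ℕ) = 2000 + 500 from rfl, mF3U_split, c3, e4]
      norm_num
    have c5 : mF3U 0 3000 = 1274333882224889102175 := by
      rw [show (3000:ℕ) = 2500 + 500 from rfl, mF3U_split, c4, e5]
      norm_num
    have c6 : mF3U 0 3500 = 1274333882255705972944 := by
      rw [show (3500:ℕ) = 3000 + 500 from rfl, mF3U_split, c5, e6]
      norm_num
    have c7 : mF3U 0 4000 = 1274333882273009252876 := by
      rw [show (4000:ℕ) = 3500 + 500 from rfl, mF3U_split, c6, e7]
      norm_num
    have c8 : mF3U 0 4500 = 1274333882283464243201 := by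
      rw [show (4500:ℕ) = 4000 + 500 from rfl, mF3U_split, c7, e8]
      norm_num
    have c9 : mF3U 0 5000 = 1274333882290149942691 := by
      rw [show (5000:ℕ) = 4500 + 500 from rfl, mF3U_split, c8, e9]
      norm_num
    have c10 : mF3U 0 5500 = 1274333882294622854114 := by
      rw [show (5500:ℕ) = 5000 + 500 from rfl, mF3U_split, c9, e10]
      norm_num
    have c11 : mF3U 0 6000 = 1274333882297727686411 := by
      rw [show (6000:ℕ) = 5500 + 500 from rfl, mF3U_split, c10, e11]
      norm_num
    have c12 : mF3U 0 6500 = 1274333882299949936145 := by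
      rw [show (6500:ℕ) = 6000 + 500 from rfl, mF3U_split, c11, e12]
      norm_num
    have c13 : mF3U 0 7000 = 1274333882301582190063 := by
      rw [show (7000:ℕ) = 6500 + 500 from rfl, mF3U_split, c12, e13]
      norm_num
    have c14 : mF3U 0 7500 = 1274333882302807945685 := by
      rw [show (7500:ℕ) = 7000 + 500 from rfl, mF3U_split, c13, e14]
      norm_num
    have c15 : mF3U 0 8000 = 1274333882303746262500 := by
      rw [show (8000:ℕ) = 7500 + 500 from rfl, mF3U_split, c14, e15]
      norm_num
    have c16 : mF3U 0 8500 = 1274333882304476689736 := by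
      rw [show (8500:ℕ) = 8000 + 500 from rfl, mF3U_split, c15, e16]
      norm_num
    have c17 : mF3U 0 8950 = 1274333882305001760953 := by
      rw [show (8950:ℕ) = 8500 + 450 from rfl, mF3U_split, c16, e17]
      norm_num
    have c18 : mF3U 0 8951 = 1274333882311275480016 := by
      rw [show (8951:ℕ) = 8950 + 1 from rfl, mF3U_split, c17, e18]
      norm_num
    have hb0 := mF3sumBound 8950
    have hb1 := mF3sumBound 8951
    rw [c17] at hb0
    rw [c18] at hb1
    have h1 : (2827433388231 : ℝ) - 1/2 ≤ mF3S 8950 := by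
      have h := abs_le.mp hb0
      push_cast at h
      unfold mF3S
      linarith [h.1]
    have h2 : mF3S 8951 ≤ (2827433388231 : ℝ) + 1/4 := by
      have h := abs_le.mp hb1
      push_cast at h
      unfold mF3S
      linarith [h.2]
    obtain ⟨m, rfl⟩ : ∃ m, n = 8950 + m := ⟨n - 8950, by omega⟩
    have hS : mF3S 8950 ≤ mF3S (8950 + m) ∧ mF3S (8950 + m) ≤ mF3S 8951 := by
      rcases Nat.even_or_odd m with ⟨j, hj⟩ | ⟨j, hj⟩
      · rw [show 8950 + m = 8950 + 2*j by omega]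
        have key := mF3S_succ (8950 + 2*j)
        rw [Even.neg_one_pow ⟨4476 + j, by omega⟩, one_mul] at key
        have ht := mF3tpos (8950 + 2*j + 1) (by omega)
        exact ⟨(mF3bracket j).1, by linarith [(mF3bracket j).2]⟩
      · rw [show 8950 + m = 8950 + 2*j + 1 by omega]
        have key := mF3S_succ (8950 + 2*j)
        rw [Even.neg_one_pow ⟨4476 + j, by omega⟩, one_mul] at key
        have ht := mF3tpos (8950 + 2*j + 1) (by omega)
        exact ⟨by linarith [(mF3bracket j).1], (mF3bracket j).2⟩
    show ⌊mF3S (8950 + m) + 1/2⌋ = 2827433388231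
    rw [Int.floor_eq_iff]
    constructor
    · push_cast
      linarith [hS.1]
    · push_cast
      linarith [hS.2]
  · decide
end

section
/- With D = 9·10^11, the alternating sum ∑_{k=1}^{214} (-1)^{k-1} · ⌊16D / ((2k-1)⁵ + 4·(2k-1))⌋ equals 2827433388226; moreover ⌊16D/((2k-1)⁵+4(2k-1))⌋ = 0 for all k ≥ 215, so this is the value to which formula F4 sums when every term is truncated to its integer part. In particular it differs from Mādhava's value 2827433388233. -/
/-- Formula F4 with every term truncated to its integer part, `D = 9·10^11`:
`∑_{k=1}^{214} (-1)^{k-1} ⌊16D/((2k-1)⁵+4(2k-1))⌋ = 2827433388226`,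
the floored terms vanish for `k ≥ 215`, and the result differs from
Mādhava's value `2827433388233`. -/
theorem stmt_16 :
    (∑ k ∈ Finset.Icc (1 : ℕ) 214, (-1 : ℤ) ^ (k - 1) *
        ⌊(16 * (9 * 10 ^ 11) : ℝ) / ((2 * (k : ℝ) - 1) ^ 5 + 4 * (2 * (k : ℝ) - 1))⌋)
      = 2827433388226 ∧
    (∀ k : ℕ, 215 ≤ k →
      ⌊(16 * (9 * 10 ^ 11) : ℝ) / ((2 * (k : ℝ) - 1) ^ 5 + 4 * (2 * (k : ℝ) - 1))⌋ = 0) ∧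
    (2827433388226 : ℤ) ≠ 2827433388233 := by
  refine ⟨?_, ?_, by decide⟩
  · rw [← Finset.Ico_add_one_right_eq_Icc, Finset.sum_Ico_eq_sum_range]
    norm_num [Finset.sum_range_succ]
  · intro k hk
    have h1 : (16 * (9 * 10 ^ 11) : ℝ) / ((2 * (k : ℝ) - 1) ^ 5 + 4 * (2 * (k : ℝ) - 1)) < 1 := by
      have hk' : (429 : ℝ) ≤ 2 * (k:ℝ) - 1 := by
        have : (215:ℝ) ≤ (k:ℝ) := by exact_mod_cast hk
        linarith
      have hd : (14400000000000 : ℝ) < (2 * (k : ℝ) - 1) ^ 5 + 4 * (2 * (k : ℝ) - 1) := by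
        nlinarith [pow_le_pow_left₀ (by norm_num : (0:ℝ) ≤ 429) hk' 5]
      rw [div_lt_one (by linarith)]
      linarith
    have h0 : (0:ℝ) ≤ (16 * (9 * 10 ^ 11) : ℝ) / ((2 * (k : ℝ) - 1) ^ 5 + 4 * (2 * (k : ℝ) - 1)) := by
      have hk' : (429 : ℝ) ≤ 2 * (k:ℝ) - 1 := by
        have : (215:ℝ) ≤ (k:ℝ) := by exact_mod_cast hk
        linarith
      positivity
    exact Int.floor_eq_zero_iff.mpr ⟨h0, h1⟩
end

section
/- With D = 9·10^11, the alternating sum ∑_{k=1}^{246} (-1)^{k-1} · ⌊16D / ((2k-1)⁵ + 4·(2k-1)) + 1/2⌋ equals 2827433388233; moreover ⌊16D/((2k-1)⁵+4(2k-1)) + 1/2⌋ = 0 for all k ≥ 247, so formula F4, with every term rounded to the nearest integer, sums exactly to Mādhava's value 2827433388233. -/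
set_option maxRecDepth 4000 in


/-- Formula F4 with every term rounded to the nearest integer, `D = 9·10^11`:
`∑_{k=1}^{246} (-1)^{k-1} ⌊16D/((2k-1)⁵+4(2k-1)) + 1/2⌋ = 2827433388233`
(exactly Mādhava's value), and the rounded terms vanish for `k ≥ 247`. -/
theorem stmt_17 :
    (∑ k ∈ Finset.Icc (1 : ℕ) 246, (-1 : ℤ) ^ (k - 1) *
        ⌊(16 * (9 * 10 ^ 11) : ℝ) / ((2 * (k : ℝ) - 1) ^ 5 + 4 * (2 * (k : ℝ) - 1)) + 1 / 2⌋)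
      = 2827433388233 ∧
    ∀ k : ℕ, 247 ≤ k →
      ⌊(16 * (9 * 10 ^ 11) : ℝ) / ((2 * (k : ℝ) - 1) ^ 5 + 4 * (2 * (k : ℝ) - 1)) + 1 / 2⌋ = 0 := by
  constructor
  · have h : Finset.Icc (1 : ℕ) 246 = Finset.range 247 \ {0} := by
      ext x; simp [Finset.mem_Icc, Nat.lt_succ_iff, Nat.one_le_iff_ne_zero]
      omega
    rw [h, Finset.sum_sdiff_eq_sub (by simp)]
    simp only [Finset.sum_range_succ, Finset.sum_range_zero, Finset.sum_singleton]
    norm_num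
  · intro k hk
    have hk' : (247 : ℝ) ≤ (k : ℝ) := by exact_mod_cast hk
    set y : ℝ := 2 * (k : ℝ) - 1 with hy
    have hy493 : (493 : ℝ) ≤ y := by rw [hy]; linarith
    have hy0 : (0 : ℝ) < y := by linarith
    have hpow : (493 : ℝ) ^ 5 ≤ y ^ 5 := by
      apply pow_le_pow_left₀ (by norm_num) hy493
    have hden : (0 : ℝ) < y ^ 5 + 4 * y := by positivity
    have hlt : (16 * (9 * 10 ^ 11) : ℝ) / (y ^ 5 + 4 * y) < 1 / 2 := by
      rw [div_lt_div_iff₀ hden (by norm_num)]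
      nlinarith
    have hge : (0 : ℝ) ≤ (16 * (9 * 10 ^ 11) : ℝ) / (y ^ 5 + 4 * y) := by positivity
    rw [Int.floor_eq_zero_iff]
    constructor <;> simp <;> linarith
end

section
/- With D = 9·10^11, for every integer n ≥ 235 the exact partial sum S_n = ∑_{k=1}^{n} (-1)^{k-1} · 16D / ((2k-1)⁵ + 4·(2k-1)) satisfies ⌊S_n + 1/2⌋ = 2827433388231. In particular, formula F4 with rounding performed only at the final stage yields 2827433388231, which differs from Mādhava's value 2827433388233. -/
/-- denominator as an integer -/
def dz (k : ℕ) : ℤ :=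
  (2*(k:ℤ)-1)*(2*(k:ℤ)-1)*(2*(k:ℤ)-1)*(2*(k:ℤ)-1)*(2*(k:ℤ)-1) + 4*(2*(k:ℤ)-1)

/-- sign `(-1)^n` as a computable integer -/
def sg (n : ℕ) : ℤ := if n % 2 = 0 then 1 else -1

/-- (numerator, denominator) of the partial sum, computed with integers only -/
def ND : ℕ → ℤ × ℤ
  | 0 => (0, 1)
  | n+1 => ((ND n).1 * dz (n+1) + sg n * (16*(9*10^11)) * (ND n).2, (ND n).2 * dz (n+1))

/-- denominator as a rational -/
def dq (k : ℕ) : ℚ := (2*(k:ℚ)-1)^5 + 4*(2*(k:ℚ)-1)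

/-- the k-th term -/
def tq (k : ℕ) : ℚ := 16*(9*10^11) / dq k

/-- the partial sum, recursively -/
def mS : ℕ → ℚ
  | 0 => 0
  | n+1 => mS n + (-1)^n * (16*(9*10^11)) / dq (n+1)

lemma dq_pos (k : ℕ) : 0 < dq (k+1) := by
  have hx : (0:ℚ) ≤ (k:ℚ) := Nat.cast_nonneg k
  unfold dq
  push_cast
  nlinarith [pow_pos (show (0:ℚ) < 2*((k:ℚ)+1)-1 by linarith) 5]

lemma dq_mono (k : ℕ) : dq (k+1) ≤ dq (k+2) := by
  have hx : (0:ℚ) ≤ (k:ℚ) := Nat.cast_nonneg k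
  unfold dq
  push_cast
  nlinarith [pow_nonneg hx 2, pow_nonneg hx 3, pow_nonneg hx 4, pow_nonneg hx 5, hx]

lemma tq_pos (k : ℕ) : 0 < tq (k+1) :=
  div_pos (by norm_num) (dq_pos k)

lemma tq_anti (k : ℕ) : tq (k+2) ≤ tq (k+1) :=
  div_le_div_of_nonneg_left (by norm_num) (dq_pos k) (dq_mono k)

lemma dz_cast (k : ℕ) : ((dz (k+1) : ℤ) : ℚ) = dq (k+1) := by
  unfold dz dq
  push_cast
  ring

lemma ND_den_pos : ∀ n, 0 < (ND n).2 := by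
  intro n
  induction n with
  | zero => norm_num [ND]
  | succ n ih =>
    have h : (0:ℚ) < ((dz (n+1) : ℤ) : ℚ) := by rw [dz_cast]; exact dq_pos n
    have hz : 0 < dz (n+1) := by exact_mod_cast h
    simpa [ND] using mul_pos ih hz

lemma sg_cast (n : ℕ) : ((sg n : ℤ) : ℚ) = (-1)^n := by
  rcases Nat.even_or_odd n with h | h
  · rw [Even.neg_one_pow h]
    simp [sg, Nat.even_iff.mp h]
  · rw [Odd.neg_one_pow h]
    have : n % 2 = 1 := Nat.odd_iff.mp h
    simp [sg, this]

lemma mS_eq (n : ℕ) : mS n = ((ND n).1 : ℚ) / ((ND n).2 : ℚ) := by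
  induction n with
  | zero => simp [mS, ND]
  | succ n ih =>
    have hd0 : ((dz (n+1) : ℤ) : ℚ) ≠ 0 := by rw [dz_cast]; exact ne_of_gt (dq_pos n)
    have hD0 : ((ND n).2 : ℚ) ≠ 0 := by
      exact_mod_cast ne_of_gt (ND_den_pos n)
    show mS n + (-1)^n * (16*(9*10^11)) / dq (n+1) = _
    rw [ih, ← dz_cast n, ← sg_cast n]
    simp only [ND]
    push_cast
    rw [div_add_div _ _ hD0 hd0,
      div_eq_div_iff (mul_ne_zero hD0 hd0) (mul_ne_zero hD0 hd0)]
    ring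

/-- invariant carrying the alternating-series sandwich -/
lemma sandwich : ∀ n, 235 ≤ n →
    (Odd n → mS 236 + tq (n+1) ≤ mS n ∧ mS n ≤ mS 235) ∧
    (Even n → mS 236 ≤ mS n ∧ mS n ≤ mS 235 - tq (n+1)) := by
  intro n hn
  induction n, hn using Nat.le_induction with
  | base =>
    have key : mS 236 = mS 235 - tq 236 := by
      show mS 235 + (-1)^235 * (16*(9*10^11)) / dq 236 = _
      have h : ((-1:ℚ))^235 = -1 := Odd.neg_one_pow ⟨117, by norm_num⟩
      rw [h, tq]; ring
    exact ⟨fun _ => ⟨by linarith [key], le_rfl⟩,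
      fun h => absurd (Nat.even_iff.mp h) (by norm_num)⟩
  | succ n hn ih =>
    have hrec : mS (n+1) = mS n + (-1)^n * tq (n+1) := by
      show mS n + (-1)^n * (16*(9*10^11)) / dq (n+1) = _
      rw [tq]; ring
    have hanti : tq (n+2) ≤ tq (n+1) := tq_anti n
    have hpos2 : 0 < tq (n+2) := tq_pos (n+1)
    have hpos1 : 0 < tq (n+1) := tq_pos n
    constructor
    · intro hodd
      have heven : Even n := Nat.even_iff.mpr (by have := Nat.odd_iff.mp hodd; omega)
      obtain ⟨a, b⟩ := ih.2 heven
      rw [Even.neg_one_pow heven, one_mul] at hrec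
      exact ⟨by rw [hrec]; linarith, by rw [hrec]; linarith⟩
    · intro heven
      have hodd : Odd n := Nat.odd_iff.mpr (by have := Nat.even_iff.mp heven; omega)
      obtain ⟨a, b⟩ := ih.1 hodd
      rw [Odd.neg_one_pow hodd] at hrec
      exact ⟨by rw [hrec]; linarith, by rw [hrec]; linarith⟩

lemma bounds (n : ℕ) (hn : 235 ≤ n) : mS 236 ≤ mS n ∧ mS n ≤ mS 235 := by
  obtain ⟨h1, h2⟩ := sandwich n hn
  rcases Nat.even_or_odd n with h | h
  · obtain ⟨a, b⟩ := h2 h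
    exact ⟨a, by linarith [tq_pos n]⟩
  · obtain ⟨a, b⟩ := h1 h
    exact ⟨by linarith [tq_pos n], b⟩

set_option maxRecDepth 40000 in
lemma num_lo : 5654866776461 * (ND 236).2 ≤ (ND 236).1 * 2 := by decide

set_option maxRecDepth 40000 in
lemma num_hi : (ND 235).1 * 2 < 5654866776463 * (ND 235).2 := by decide

lemma mS236_lo : (5654866776461 : ℚ)/2 ≤ mS 236 := by
  rw [mS_eq, div_le_div_iff₀ (by norm_num) (by exact_mod_cast ND_den_pos 236)]
  exact_mod_cast num_lo

lemma mS235_hi : mS 235 < (5654866776463 : ℚ)/2 := by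
  rw [mS_eq, div_lt_div_iff₀ (by exact_mod_cast ND_den_pos 235) (by norm_num)]
  exact_mod_cast num_hi

lemma sum_eq (n : ℕ) :
    (∑ k ∈ Finset.Icc 1 n, (-1 : ℚ) ^ (k - 1) *
        (16 * (9 * 10 ^ 11)) / ((2 * (k : ℚ) - 1) ^ 5 + 4 * (2 * (k : ℚ) - 1))) = mS n := by
  induction n with
  | zero => simp [mS]
  | succ n ih =>
    rw [Finset.sum_Icc_succ_top (Nat.succ_le_succ (Nat.zero_le n)), ih, Nat.add_sub_cancel]
    show _ = mS n + (-1)^n * (16*(9*10^11)) / dq (n+1)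
    unfold dq
    push_cast
    ring

/-- Formula F4 with rounding only at the final stage, `D = 9·10^11`: for every
`n ≥ 235` the exact partial sum
`S_n = ∑_{k=1}^{n} (-1)^{k-1}·16D/((2k-1)⁵+4(2k-1))` satisfies
`⌊S_n + 1/2⌋ = 2827433388231`, which differs from Mādhava's value `2827433388233`. -/
theorem stmt_18 :
    (∀ n : ℕ, 235 ≤ n →
      ⌊(∑ k ∈ Finset.Icc 1 n, (-1 : ℝ) ^ (k - 1) *
          (16 * (9 * 10 ^ 11)) / ((2 * (k : ℝ) - 1) ^ 5 + 4 * (2 * (k : ℝ) - 1))) + 1 / 2⌋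
        = 2827433388231) ∧
    (2827433388231 : ℤ) ≠ 2827433388233 := by
  constructor
  · intro n hn
    have hreal : (∑ k ∈ Finset.Icc 1 n, (-1 : ℝ) ^ (k - 1) *
          (16 * (9 * 10 ^ 11)) / ((2 * (k : ℝ) - 1) ^ 5 + 4 * (2 * (k : ℝ) - 1)))
        = ((mS n : ℚ) : ℝ) := by
      rw [← sum_eq n, Rat.cast_sum]
      refine Finset.sum_congr rfl fun k _ => ?_
      push_cast
      ring
    obtain ⟨hlo, hhi⟩ := bounds n hn
    have hcomb : ((mS n : ℚ) : ℝ) + 1/2 = ((mS n + 1/2 : ℚ) : ℝ) := by push_cast; ring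
    rw [hreal, hcomb, Rat.floor_cast, Int.floor_eq_iff]
    have h1 : (2827433388231 : ℚ) ≤ mS n + 1/2 := by
      have := mS236_lo; linarith
    have h2 : mS n + 1/2 < (2827433388232 : ℚ) := by
      have := mS235_hi; linarith
    constructor
    · exact_mod_cast h1
    · push_cast
      linarith
  · norm_num
end
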